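/- In the matrix ring ℚ[M₄(ℤ)], (P·∑_{σ∈S₄}σ)^{-∗}·J = (∑_{σ∈S₄}σ)·T₁, where P = [[1,0,0,0],[-1,1,0,0],[0,-1,1,0],[0,0,-1,1]], J = diag(0,1,1,1), T₁ = [[0,0,0,0],[0,1,0,0],[0,1,1,0],[0,1,1,1]], and for Γ = ∑aₖMₖ ∈ ℚ[GL₄(ℤ)], Γ^{-∗} = ∑aₖMₖ^{-1}. -/

import Mathlib

/-- 4×4 integer matrices. -/
abbrev M4 : Type := Matrix (Fin 4) (Fin 4) ℤ

/-- The ℚ-algebra spanned freely by 4×4 integer matrices (containing the group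
ring ℚ[GL₄(ℤ)] as the span of the invertible matrices). -/
abbrev QM4 : Type := MonoidAlgebra ℚ M4

/-- The canonical embedding of a matrix into the monoid algebra. -/
noncomputable def emb (M : M4) : QM4 := MonoidAlgebra.single M 1

/-- Permutation matrix `(δ_{i σ(j)})` of `σ ∈ S₄`. -/
def pm (σ : Equiv.Perm (Fin 4)) : M4 := Matrix.of fun i j => if i = σ j then 1 else 0

/-- The shuffle element sh(2,4) = ∑_{σ(1)<σ(2), σ(3)<σ(4)} σ. -/
noncomputable def sh24 : QM4 :=
  ∑ σ ∈ Finset.univ.filter (fun σ : Equiv.Perm (Fin 4) => σ 0 < σ 1 ∧ σ 2 < σ 3), emb (pm σ)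

/-- The element Φ. -/
noncomputable def Phi : QM4 :=
  emb 1 + emb !![1,0,0,0; 0,1,1,0; 0,0,-1,0; 0,0,1,1]
    + emb !![1,1,1,0; 0,-1,-1,0; 0,1,0,0; 0,0,1,1]

/-- The element Ψ. -/
noncomputable def Psi : QM4 :=
  emb 1 + emb !![1,0,0,0; 0,1,0,0; 0,0,1,1; 0,0,0,-1]
    + emb !![1,0,0,0; 0,1,1,1; 0,0,-1,-1; 0,0,1,0]
    + emb !![1,1,1,1; 0,-1,-1,-1; 0,1,0,0; 0,0,1,0]

/-- The inverse-star map: for Γ = ∑ aₖ Mₖ, Γ^{-∗} = ∑ aₖ Mₖ⁻¹. -/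
noncomputable def invStar (Γ : QM4) : QM4 :=
  Finsupp.sum Γ.coeff (fun M a => MonoidAlgebra.single M⁻¹ a)

/-- The 4-cycle (1234) (on Fin 4: 0↦1↦2↦3↦0). -/
def c1234 : Equiv.Perm (Fin 4) := Equiv.swap 0 1 * Equiv.swap 1 2 * Equiv.swap 2 3

/-- The sum ∑_{σ∈C₄} σ over the cyclic group C₄ = {e,(1234),(13)(24),(1432)}. -/
noncomputable def C4sum : QM4 :=
  emb 1 + emb (pm c1234) + emb (pm (c1234 ^ 2)) + emb (pm (c1234 ^ 3))

/-- J = diag(0,1,1,1). -/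
def J : M4 := !![0,0,0,0; 0,1,0,0; 0,0,1,0; 0,0,0,1]

def T1 : M4 := !![0,0,0,0; 0,1,0,0; 0,1,1,0; 0,1,1,1]
def T2 : M4 := !![0,0,0,0; 0,1,0,0; 0,0,1,0; 0,1,1,1]
def T3 : M4 := !![0,0,0,0; 0,1,0,0; 0,0,1,1; 0,1,1,0]
def T4 : M4 := !![0,0,0,0; 0,1,1,0; 0,0,0,1; 0,1,0,0]


theorem MonoidHom.matrix_inv_apply {G n R : Type*} [Group G] [Fintype n] [DecidableEq n]
    [CommRing R] (f : G →* Matrix n n R) (g : G) : (f g)⁻¹ = f g⁻¹ :=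
  Matrix.inv_eq_left_inv (by rw [← map_mul, inv_mul_cancel, map_one])

lemma emb_mul (M N : M4) : emb M * emb N = emb (M * N) := by
  simp only [emb, MonoidAlgebra.single_mul_single, mul_one]

lemma invStar_emb (M : M4) : invStar (emb M) = emb M⁻¹ := by
  simp [invStar, emb]

lemma invStar_sum {ι : Type*} (s : Finset ι) (f : ι → QM4) :
    invStar (∑ i ∈ s, f i) = ∑ i ∈ s, invStar (f i) := by
  simp only [invStar, MonoidAlgebra.coeff_sum]
  exact (Finsupp.sum_finsetSum_index (fun _ => MonoidAlgebra.single_zero _)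
    (fun _ _ _ => MonoidAlgebra.single_add _ _ _)).symm

lemma pm_eq_permMatrixHom (σ : Equiv.Perm (Fin 4)) : pm σ = Matrix.permMatrixHom σ := by
  ext i j
  simp [pm, Equiv.toPEquiv_apply, PEquiv.toMatrix_apply, Equiv.eq_symm_apply, eq_comm]

/-- `(∑ g)` is invariant under `g ↦ g⁻¹`, so `(P · ∑ g)^{-∗} = (∑ g) · P⁻¹`. -/
lemma invStar_emb_mul_sum_mul_emb {G : Type*} [Group G] [Fintype G] (f : G →* M4) (P J : M4) :
    invStar (emb P * ∑ g, emb (f g)) * emb J = (∑ g, emb (f g)) * emb (P⁻¹ * J) :=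
  calc invStar (emb P * ∑ g, emb (f g)) * emb J
      = ∑ g, emb (f g⁻¹ * (P⁻¹ * J)) := by
        simp only [Finset.mul_sum, emb_mul, invStar_sum, invStar_emb, Finset.sum_mul,
          Matrix.mul_inv_rev, f.matrix_inv_apply, mul_assoc]
    _ = ∑ g, emb (f g * (P⁻¹ * J)) :=
        Equiv.sum_comp (Equiv.inv G) (fun g => emb (f g * (P⁻¹ * J)))
    _ = (∑ g, emb (f g)) * emb (P⁻¹ * J) := by simp only [Finset.sum_mul, emb_mul]

/-- (P·∑_{σ∈S₄}σ)^{-∗}·J = (∑_{σ∈S₄}σ)·T₁ in ℚ[M₄(ℤ)]. -/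
theorem lem_2_2_eq1 :
    invStar (emb !![1,0,0,0; -1,1,0,0; 0,-1,1,0; 0,0,-1,1]
        * ∑ σ : Equiv.Perm (Fin 4), emb (pm σ)) * emb J
      = (∑ σ : Equiv.Perm (Fin 4), emb (pm σ)) * emb T1 := by
  have hP : (!![1,0,0,0; -1,1,0,0; 0,-1,1,0; 0,0,-1,1] : M4)⁻¹
      = !![1,0,0,0; 1,1,0,0; 1,1,1,0; 1,1,1,1] :=
    Matrix.inv_eq_right_inv (by decide)
  have hT : (!![1,0,0,0; 1,1,0,0; 1,1,1,0; 1,1,1,1] : M4) * J = T1 := by decide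
  simp only [pm_eq_permMatrixHom]
  rw [invStar_emb_mul_sum_mul_emb, hP, hT]
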